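/- arXiv:2106.12118 — 2 statements merged into one kernel-verified Lean document; each statement's English description precedes it below -/
import Mathlib

section
/- If X(u) is the 2^d × 2^d matrix with entries X(u)(k,b) = Σ_{a: a&b=k} u(a) c(a|b), and X(u) is invertible, then the marginal Gram matrix G(u) is invertible with inverse G(X(u)⁻¹ z), where z ∈ ℝ^{2^d} is the standard basis vector with z(2^d−1)=1. -/
open Matrix

instance fintypeIte (p : Prop) [Decidable p] (α β : Type) [Fintype α] [Fintype β] :
    Fintype (if p then α else β) := by
  by_cases h : p
  · rw [if_pos h]; infer_instance
  · rw [if_neg h]; infer_instance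

instance decEqIte (p : Prop) [Decidable p] (α β : Type) [DecidableEq α] [DecidableEq β] :
    DecidableEq (if p then α else β) := by
  by_cases h : p
  · rw [if_pos h]; infer_instance
  · rw [if_neg h]; infer_instance

/-- Row index type for the query matrix of the marginal `a`: one coordinate for each
attribute `i` with `a i = true`, and a trivial coordinate otherwise. -/
def RowIdx {d : ℕ} (n : Fin d → ℕ) (a : Fin d → Bool) : Type :=
  ∀ i, if a i then Fin (n i) else Unit

instance {d : ℕ} (n : Fin d → ℕ) (a : Fin d → Bool) : Fintype (RowIdx n a) := by
  unfold RowIdx; infer_instance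

instance {d : ℕ} (n : Fin d → ℕ) (a : Fin d → Bool) : DecidableEq (RowIdx n a) := by
  unfold RowIdx; infer_instance

/-- `c(a) = ∏ᵢ [nᵢ if aᵢ = 0 else 1]`. -/
def cvec {d : ℕ} (n : Fin d → ℕ) (a : Fin d → Bool) : ℝ :=
  ∏ i, if a i then 1 else (n i : ℝ)

/-- `H(a) = ⊗ᵢ [𝟏 if aᵢ = 0, I if aᵢ = 1]`. -/
def Hmat {d : ℕ} (n : Fin d → ℕ) (a : Fin d → Bool) :
    Matrix (∀ i, Fin (n i)) (∀ i, Fin (n i)) ℝ :=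
  fun q t => ∏ i, if a i then (if q i = t i then 1 else 0) else 1

/-- `G(v) = Σ_a v(a) H(a)`: a marginal Gram matrix. -/
noncomputable def Gmat {d : ℕ} (n : Fin d → ℕ) (v : (Fin d → Bool) → ℝ) :
    Matrix (∀ i, Fin (n i)) (∀ i, Fin (n i)) ℝ :=
  ∑ a, v a • Hmat n a

/-- `Q(a) = ⊗ᵢ [T if aᵢ = 0, I if aᵢ = 1]`: the query matrix of the marginal `a`. -/
def Qmat {d : ℕ} (n : Fin d → ℕ) (a : Fin d → Bool) :
    Matrix (RowIdx n a) (∀ i, Fin (n i)) ℝ :=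
  fun r t => ∏ i, if h : a i then (if cast (if_pos h) (r i) = t i then 1 else 0) else 1

/-- `M(u)`: the vertical stacking of `u(a) • Q(a)` over all marginals `a`. -/
def Mmat {d : ℕ} (n : Fin d → ℕ) (u : (Fin d → Bool) → ℝ) :
    Matrix ((a : Fin d → Bool) × RowIdx n a) (∀ i, Fin (n i)) ℝ :=
  fun r t => u r.1 * Qmat n r.1 r.2 t

/-- The matrix `X(u)` with `X(u)(k,b) = Σ_{a : a&b=k} u(a) c(a|b)`. -/
noncomputable def Xmat {d : ℕ} (n : Fin d → ℕ) (u : (Fin d → Bool) → ℝ) :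
    Matrix (Fin d → Bool) (Fin d → Bool) ℝ :=
  fun k b => ∑ a ∈ Finset.univ.filter (fun a : Fin d → Bool => (fun i => a i && b i) = k),
    u a * cvec n (fun i => a i || b i)

/-- The basis vector `z` with `z(2^d − 1) = 1` (i.e. supported on the all-ones bit pattern). -/
noncomputable def zvec {d : ℕ} : (Fin d → Bool) → ℝ :=
  fun b => if b = (fun _ => true) then 1 else 0


lemma Hmat_top {d : ℕ} (n : Fin d → ℕ) : Hmat n (fun _ => true) = 1 := by
  ext q t
  simp only [Hmat, if_true, Matrix.one_apply, Fintype.prod_boole]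
  simp [funext_iff]

lemma coord_sum (m : ℕ) (aI bI : Bool) (qi ti : Fin m) :
    (∑ j : Fin m, (if aI = true then if qi = j then (1:ℝ) else 0 else 1) *
      if bI = true then if j = ti then 1 else 0 else 1) =
    (if (aI || bI) = true then 1 else (m : ℝ)) *
      if (aI && bI) = true then if qi = ti then 1 else 0 else 1 := by
  cases aI <;> cases bI <;>
    simp [Finset.mul_sum, Finset.sum_ite_eq, Finset.sum_ite_eq', mul_comm]

lemma Hmat_mul {d : ℕ} (n : Fin d → ℕ) (a b : Fin d → Bool) :
    Hmat n a * Hmat n b = cvec n (fun i => a i || b i) • Hmat n (fun i => a i && b i) := by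
  ext q t
  simp only [Matrix.mul_apply, Hmat, Matrix.smul_apply, smul_eq_mul, cvec]
  simp only [← Finset.prod_mul_distrib]
  rw [← Fintype.piFinset_univ,
    ← Finset.prod_univ_sum (fun i => (Finset.univ : Finset (Fin (n i))))
      (fun i x => (if a i = true then if q i = x then (1:ℝ) else 0 else 1) *
        if b i = true then if x = t i then 1 else 0 else 1)]
  exact Finset.prod_congr rfl fun i _ => coord_sum (n i) (a i) (b i) (q i) (t i)

lemma Gmat_mul {d : ℕ} (n : Fin d → ℕ) (u v : (Fin d → Bool) → ℝ) :
    Gmat n u * Gmat n v = Gmat n ((Xmat n u).mulVec v) := by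
  unfold Gmat Xmat Matrix.mulVec dotProduct
  rw [Finset.sum_mul]
  simp only [Finset.mul_sum, Matrix.smul_mul, Matrix.mul_smul, Hmat_mul, smul_smul, Finset.sum_smul]
  rw [Finset.sum_comm]
  conv_rhs => rw [Finset.sum_comm]
  refine Finset.sum_congr rfl fun b _ => ?_
  rw [← Finset.sum_fiberwise Finset.univ (fun a => (fun i => a i && b i))
    (fun a => (v b * (u a * cvec n (fun i => a i || b i))) • Hmat n (fun i => a i && b i))]
  refine Finset.sum_congr rfl fun k _ => ?_
  rw [Finset.sum_mul, Finset.sum_smul]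
  refine Finset.sum_congr rfl fun a ha => ?_
  have hk : (fun i => a i && b i) = k := (Finset.mem_filter.mp ha).2
  rw [hk]
  congr 1
  ring

lemma Gmat_zvec {d : ℕ} (n : Fin d → ℕ) : Gmat n (zvec (d := d)) = 1 := by
  unfold Gmat zvec
  simp only [ite_smul, one_smul, zero_smul, Finset.sum_ite_eq', Finset.mem_univ, if_true]
  exact Hmat_top n

/-- If `X(u)` is invertible then `G(u)` is invertible with inverse `G(X(u)⁻¹ z)`. -/
theorem Gmat_inverse {d : ℕ} (n : Fin d → ℕ) (u : (Fin d → Bool) → ℝ)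
    (hX : IsUnit (Xmat n u)) :
    Gmat n u * Gmat n ((Xmat n u)⁻¹.mulVec zvec) = 1 ∧
    Gmat n ((Xmat n u)⁻¹.mulVec zvec) * Gmat n u = 1 := by
  have hdet : IsUnit (Xmat n u).det := (Matrix.isUnit_iff_isUnit_det _).mp hX
  have h1 : Gmat n u * Gmat n ((Xmat n u)⁻¹.mulVec zvec) = 1 := by
    rw [Gmat_mul, Matrix.mulVec_mulVec, Matrix.mul_nonsing_inv _ hdet, Matrix.one_mulVec,
      Gmat_zvec]
  exact ⟨h1, mul_eq_one_comm.mp h1⟩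
end

section
/- Every column of V(a) is an eigenvector of every marginal Gram matrix G(w), with eigenvalue κ(a) = Σ_{b: a&b=a} w(b) c(b); that is, G(w) V(a) = κ(a) V(a) for all w ∈ ℝ^{2^d}. -/
open Matrix

/-- `V(a) = ⊗ᵢ [n_i×1 all-ones matrix if aᵢ=0, 𝟏 − nᵢ I if aᵢ=1]`. -/
def Vmat {d : ℕ} (n : Fin d → ℕ) (a : Fin d → Bool) :
    Matrix (∀ i, Fin (n i)) (RowIdx n a) ℝ :=
  fun q r => ∏ i, if h : a i then
    (if q i = cast (if_pos h) (r i) then 1 - (n i : ℝ) else 1) else 1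

lemma Hmat_mul_Vmat {d : ℕ} (n : Fin d → ℕ) (a b : Fin d → Bool) :
    Hmat n b * Vmat n a =
      if (fun i => a i && b i) = a then cvec n b • Vmat n a else 0 := by
  ext q r
  rw [Matrix.mul_apply]
  have key : ∀ t : ∀ i, Fin (n i), Hmat n b q t * Vmat n a t r
      = ∏ i, ((if b i then (if q i = t i then (1:ℝ) else 0) else 1) *
              (if h : a i then (if t i = cast (if_pos h) (r i) then 1 - (n i:ℝ) else 1) else 1)) := by
    intro t
    rw [Hmat, Vmat, ← Finset.prod_mul_distrib]
  simp_rw [key]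
  rw [← Fintype.prod_sum (fun (i : Fin d) (j : Fin (n i)) =>
      ((if b i then (if q i = j then (1:ℝ) else 0) else 1) *
        (if h : a i then (if j = cast (if_pos h) (r i) then 1 - (n i:ℝ) else 1) else 1)))]
  -- per-coordinate sums
  have coord : ∀ i, (∑ j : Fin (n i),
      ((if b i then (if q i = j then (1:ℝ) else 0) else 1) *
        (if h : a i then (if j = cast (if_pos h) (r i) then 1 - (n i:ℝ) else 1) else 1)))
      = if b i then
          (if h : a i then (if q i = cast (if_pos h) (r i) then 1 - (n i:ℝ) else 1) else 1)
        else if a i then 0 else (n i : ℝ) := by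
    intro i
    by_cases hb : b i
    · simp only [hb, if_true]
      rw [Finset.sum_eq_single (q i)]
      · simp
      · intro j _ hj; simp [Ne.symm hj]
      · simp
    · simp only [hb, if_false, one_mul]
      by_cases ha : a i
      · have he : ∀ x : Fin (n i), (if x = cast (if_pos ha) (r i) then 1-(n i:ℝ) else 1)
            = 1 + (if x = cast (if_pos ha) (r i) then -(n i:ℝ) else 0) := by
          intro x; by_cases hx : x = cast (if_pos ha) (r i) <;> simp [hx] <;> ring
        simp [hb, ha, he, Finset.sum_add_distrib, Finset.sum_ite_eq', Finset.card_univ]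
      · simp [hb, ha, Finset.card_univ]
  simp_rw [coord]
  by_cases hab : (fun i => a i && b i) = a
  · rw [if_pos hab]
    have hi : ∀ i, a i → b i := by
      intro i hai
      have := congrFun hab i
      simp [hai] at this; exact this
    rw [Matrix.smul_apply, cvec, Vmat, smul_eq_mul, ← Finset.prod_mul_distrib]
    apply Finset.prod_congr rfl
    intro i _
    by_cases hb : b i
    · simp only [hb, if_true, one_mul]
    · have ha : ¬ a i := fun h => hb (hi i h)
      simp [hb, ha]
  · rw [if_neg hab]
    obtain ⟨i, hi⟩ : ∃ i, a i ∧ ¬ b i := by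
      by_contra h
      push_neg at h
      apply hab
      funext i
      cases hai : a i with
      | false => simp [hai]
      | true => simp [hai, h i hai]
    rw [Matrix.zero_apply]
    apply Finset.prod_eq_zero (Finset.mem_univ i)
    simp [hi.1, hi.2]

theorem Gmat_mul_Vmat' {d : ℕ} (n : Fin d → ℕ) (a : Fin d → Bool)
    (w : (Fin d → Bool) → ℝ) :
    Gmat n w * Vmat n a =
      (∑ b ∈ Finset.univ.filter (fun b : Fin d → Bool => (fun i => a i && b i) = a),
        w b * cvec n b) • Vmat n a := by
  rw [Gmat, Matrix.sum_mul, Finset.sum_smul]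
  rw [← Finset.sum_filter_add_sum_filter_not Finset.univ
    (fun b : Fin d → Bool => (fun i => a i && b i) = a)]
  have h1 : ∀ b ∈ Finset.univ.filter (fun b : Fin d → Bool => (fun i => a i && b i) = a),
      (w b • Hmat n b) * Vmat n a = (w b * cvec n b) • Vmat n a := by
    intro b hb
    rw [Finset.mem_filter] at hb
    rw [Matrix.smul_mul, Hmat_mul_Vmat, if_pos hb.2, smul_smul]
  have h2 : ∀ b ∈ Finset.univ.filter (fun b : Fin d → Bool => ¬(fun i => a i && b i) = a),
      (w b • Hmat n b) * Vmat n a = 0 := by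
    intro b hb
    rw [Finset.mem_filter] at hb
    rw [Matrix.smul_mul, Hmat_mul_Vmat, if_neg hb.2, smul_zero]
  rw [Finset.sum_congr rfl h1, Finset.sum_congr rfl h2, Finset.sum_const_zero, add_zero]

/-- Every column of `V(a)` is an eigenvector of every marginal Gram matrix `G(w)`,
with eigenvalue `κ(a) = Σ_{b : a&b=a} w(b) c(b)`. -/
theorem Gmat_mul_Vmat {d : ℕ} (n : Fin d → ℕ) (a : Fin d → Bool)
    (w : (Fin d → Bool) → ℝ) :
    Gmat n w * Vmat n a =
      (∑ b ∈ Finset.univ.filter (fun b : Fin d → Bool => (fun i => a i && b i) = a),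
        w b * cvec n b) • Vmat n a := by
  exact Gmat_mul_Vmat' n a w
end
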